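/- For α ∈ (0,1/2], t ∈ (0, 1-α], c = cos(πα), and the GGC random variable X_{c,t} with Laplace transform E[e^{-λX_{c,t}}] = 1/(1 + 2cλ^t + λ^{2t}), one has E[X_{c,t}^{-t}] = πα/(sin(πα)·Γ(t+1)). -/

import Mathlib

open Real Set MeasureTheory Filter Topology

/-!
Integrating `Γ(t) x⁻ᵗ = ∫₀^∞ lᵗ⁻¹ e^{-lx} dl` against the law of `X` (Tonelli) gives
`Γ(t) E[X⁻ᵗ] = ∫₀^∞ lᵗ⁻¹ E[e^{-lX}] dl`. With `θ = πα`, the substitution `u = lᵗ` and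
`1 + 2u cos θ + u² = (u + cos θ)² + sin² θ` turn the right side into
`t⁻¹ ∫₀^∞ du / ((u + cos θ)² + sin² θ) = t⁻¹ (π/2 - arctan (cot θ)) / sin θ = θ / (t sin θ)`,
and `Γ(t + 1) = t Γ(t)` finishes.
-/

lemma hasDerivAt_arctan_add_div {c s : ℝ} (hs : s ≠ 0) (x : ℝ) :
    HasDerivAt (fun u => arctan ((u + c) / s) / s) (1 / ((x + c) ^ 2 + s ^ 2)) x := by
  have h := ((((hasDerivAt_id x).add_const c).div_const s).arctan).div_const s
  refine h.congr_deriv ?_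
  simp only [id]
  field_simp
  ring

lemma tendsto_arctan_add_div_atTop {c s : ℝ} (hs : 0 < s) :
    Tendsto (fun u => arctan ((u + c) / s) / s) atTop (𝓝 (π / 2 / s)) :=
  ((tendsto_arctan_atTop.mono_right nhdsWithin_le_nhds).comp
    ((tendsto_atTop_add_const_right _ c tendsto_id).atTop_div_const hs)).div_const s

lemma integrableOn_Ioi_one_div_add_sq_add_sq (c : ℝ) {s : ℝ} (hs : 0 < s) :
    IntegrableOn (fun u => 1 / ((u + c) ^ 2 + s ^ 2)) (Ioi 0) :=
  integrableOn_Ioi_deriv_of_nonneg' (fun x _ => hasDerivAt_arctan_add_div hs.ne' x)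
    (fun _ _ => by positivity) (tendsto_arctan_add_div_atTop hs)

lemma integral_Ioi_one_div_add_sq_add_sq (c : ℝ) {s : ℝ} (hs : 0 < s) :
    ∫ u in Ioi 0, 1 / ((u + c) ^ 2 + s ^ 2) = (π / 2 - arctan (c / s)) / s := by
  rw [integral_Ioi_of_hasDerivAt_of_nonneg' (fun x _ => hasDerivAt_arctan_add_div hs.ne' x)
    (fun _ _ => by positivity) (tendsto_arctan_add_div_atTop hs), zero_add, sub_div]

lemma arctan_cos_div_sin {θ : ℝ} (h0 : 0 < θ) (hπ : θ < π) :
    arctan (cos θ / sin θ) = π / 2 - θ := by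
  rw [← sin_pi_div_two_sub, ← cos_pi_div_two_sub θ, ← tan_eq_sin_div_cos]
  exact arctan_tan (by linarith) (by linarith)

lemma one_add_two_cos_mul_rpow_add_rpow_two_mul (θ t : ℝ) {l : ℝ} (hl : 0 ≤ l) :
    1 + 2 * cos θ * l ^ t + l ^ (2 * t) = (l ^ t + cos θ) ^ 2 + sin θ ^ 2 := by
  rw [mul_comm 2 t, rpow_mul hl, rpow_two]
  linear_combination -sin_sq_add_cos_sq θ

lemma integrableOn_rpow_sub_one_div_one_add_two_cos_mul_rpow_add_rpow {θ t : ℝ}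
    (hθ0 : 0 < θ) (hθπ : θ < π) (ht : 0 < t) :
    IntegrableOn (fun l => l ^ (t - 1) * (1 / (1 + 2 * cos θ * l ^ t + l ^ (2 * t)))) (Ioi 0) := by
  refine ((integrableOn_Ioi_comp_rpow_iff' _ ht.ne').mpr
    (integrableOn_Ioi_one_div_add_sq_add_sq (cos θ) (sin_pos_of_pos_of_lt_pi hθ0 hθπ))).congr_fun
    (fun l hl => ?_) measurableSet_Ioi
  simp only [smul_eq_mul, one_add_two_cos_mul_rpow_add_rpow_two_mul θ t (le_of_lt hl)]

lemma integral_rpow_sub_one_div_one_add_two_cos_mul_rpow_add_rpow {θ t : ℝ}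
    (hθ0 : 0 < θ) (hθπ : θ < π) (ht : 0 < t) :
    ∫ l in Ioi 0, l ^ (t - 1) * (1 / (1 + 2 * cos θ * l ^ t + l ^ (2 * t))) = θ / (t * sin θ) := by
  have hs := sin_pos_of_pos_of_lt_pi hθ0 hθπ
  calc ∫ l in Ioi 0, l ^ (t - 1) * (1 / (1 + 2 * cos θ * l ^ t + l ^ (2 * t)))
      = t⁻¹ * ∫ l in Ioi 0, (t * l ^ (t - 1)) • (1 / ((l ^ t + cos θ) ^ 2 + sin θ ^ 2)) := by
        rw [← integral_const_mul]
        refine setIntegral_congr_fun measurableSet_Ioi fun l hl => ?_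
        simp only [smul_eq_mul, one_add_two_cos_mul_rpow_add_rpow_two_mul θ t (le_of_lt hl)]
        field_simp
    _ = θ / (t * sin θ) := by
        rw [integral_comp_rpow_Ioi_of_pos (g := fun u => 1 / ((u + cos θ) ^ 2 + sin θ ^ 2)) ht,
          integral_Ioi_one_div_add_sq_add_sq _ hs, arctan_cos_div_sin hθ0 hθπ]
        field_simp
        ring

lemma lintegral_Ioi_rpow_mul_exp_neg_mul {a r : ℝ} (ha : 0 < a) (hr : 0 < r) :
    ∫⁻ x in Ioi 0, ENNReal.ofReal (x ^ (a - 1) * exp (-(r * x))) =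
      ENNReal.ofReal (Gamma a * r ^ (-a)) := by
  have hint : IntegrableOn (fun x => x ^ (a - 1) * exp (-(r * x))) (Ioi 0) := by
    refine (integrableOn_rpow_mul_exp_neg_mul_rpow (s := a - 1) (by linarith) zero_lt_one
      hr).congr_fun (fun x _ => ?_) measurableSet_Ioi
    simp only [rpow_one, neg_mul]
  have hnonneg : 0 ≤ᵐ[volume.restrict (Ioi 0)] fun x => x ^ (a - 1) * exp (-(r * x)) := by
    filter_upwards [ae_restrict_mem measurableSet_Ioi] with x hx
    exact mul_nonneg (rpow_nonneg (le_of_lt hx) _) (exp_pos _).le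
  rw [← ofReal_integral_eq_lintegral_ofReal hint hnonneg, integral_rpow_mul_exp_neg_mul_Ioi ha hr,
    one_div, inv_rpow hr.le, ← rpow_neg hr.le, mul_comm]

theorem lintegral_rpow_sub_one_mul_lintegral_exp_neg_mul {Ω : Type*} [MeasurableSpace Ω]
    {μ : Measure Ω} [SFinite μ] {X : Ω → ℝ} (hX : AEMeasurable X μ) (hXpos : ∀ᵐ ω ∂μ, 0 < X ω)
    {t : ℝ} (ht : 0 < t) :
    ∫⁻ l in Ioi 0, ENNReal.ofReal (l ^ (t - 1)) * ∫⁻ ω, ENNReal.ofReal (exp (-(l * X ω))) ∂μ =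
      ENNReal.ofReal (Gamma t) * ∫⁻ ω, ENNReal.ofReal (X ω ^ (-t)) ∂μ := by
  have hmeas : AEMeasurable (Function.uncurry fun ω (l : ℝ) =>
      ENNReal.ofReal (l ^ (t - 1) * exp (-(X ω * l)))) (μ.prod (volume.restrict (Ioi 0))) := by
    fun_prop
  calc ∫⁻ l in Ioi 0, ENNReal.ofReal (l ^ (t - 1)) * ∫⁻ ω, ENNReal.ofReal (exp (-(l * X ω))) ∂μ
      = ∫⁻ l in Ioi 0, ∫⁻ ω, ENNReal.ofReal (l ^ (t - 1) * exp (-(X ω * l))) ∂μ := by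
        refine setLIntegral_congr_fun measurableSet_Ioi fun l hl => ?_
        simp only [ENNReal.ofReal_mul (rpow_nonneg (le_of_lt hl) _), mul_comm (X _) l]
        exact (lintegral_const_mul' _ _ ENNReal.ofReal_ne_top).symm
    _ = ∫⁻ ω, (∫⁻ l in Ioi 0, ENNReal.ofReal (l ^ (t - 1) * exp (-(X ω * l)))) ∂μ :=
        (lintegral_lintegral_swap hmeas).symm
    _ = ∫⁻ ω, ENNReal.ofReal (Gamma t) * ENNReal.ofReal (X ω ^ (-t)) ∂μ := by
        refine lintegral_congr_ae ?_
        filter_upwards [hXpos] with ω hω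
        rw [lintegral_Ioi_rpow_mul_exp_neg_mul ht hω, ENNReal.ofReal_mul (Gamma_pos_of_pos ht).le]
    _ = ENNReal.ofReal (Gamma t) * ∫⁻ ω, ENNReal.ofReal (X ω ^ (-t)) ∂μ :=
        lintegral_const_mul' _ _ ENNReal.ofReal_ne_top

theorem integral_rpow_neg_eq_integral_laplace_div_Gamma {Ω : Type*} [MeasurableSpace Ω]
    {μ : Measure Ω} [SFinite μ] {X : Ω → ℝ} (hXpos : ∀ᵐ ω ∂μ, 0 < X ω)
    (hlap : ∀ l : ℝ, 0 < l → Integrable (fun ω => exp (-(l * X ω))) μ) {t : ℝ} (ht : 0 < t)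
    (hint : IntegrableOn (fun l => l ^ (t - 1) * ∫ ω, exp (-(l * X ω)) ∂μ) (Ioi 0)) :
    ∫ ω, X ω ^ (-t) ∂μ = (∫ l in Ioi 0, l ^ (t - 1) * ∫ ω, exp (-(l * X ω)) ∂μ) / Gamma t := by
  have hX : AEMeasurable X μ := by
    have h : AEMeasurable (fun ω => -log (exp (-(1 * X ω)))) μ :=
      (measurable_log.comp_aemeasurable (hlap 1 one_pos).aemeasurable).neg
    simpa only [log_exp, one_mul, neg_neg] using h
  have hnonneg : 0 ≤ᵐ[volume.restrict (Ioi 0)]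
      fun l : ℝ => l ^ (t - 1) * ∫ ω, exp (-(l * X ω)) ∂μ := by
    filter_upwards [ae_restrict_mem measurableSet_Ioi] with l hl
    exact mul_nonneg (rpow_nonneg (le_of_lt hl) _) (integral_nonneg fun _ => (exp_pos _).le)
  have hlintegral : ∫⁻ l in Ioi 0,
      ENNReal.ofReal (l ^ (t - 1)) * ∫⁻ ω, ENNReal.ofReal (exp (-(l * X ω))) ∂μ =
      ENNReal.ofReal (∫ l in Ioi 0, l ^ (t - 1) * ∫ ω, exp (-(l * X ω)) ∂μ) := by
    rw [ofReal_integral_eq_lintegral_ofReal hint hnonneg]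
    refine setLIntegral_congr_fun measurableSet_Ioi fun l hl => ?_
    rw [ENNReal.ofReal_mul (rpow_nonneg (le_of_lt hl) _), ofReal_integral_eq_lintegral_ofReal
      (hlap l hl) (Eventually.of_forall fun _ => (exp_pos _).le)]
  have key := congrArg ENNReal.toReal
    ((lintegral_rpow_sub_one_mul_lintegral_exp_neg_mul hX hXpos ht).symm.trans hlintegral)
  rw [ENNReal.toReal_mul, ENNReal.toReal_ofReal (Gamma_pos_of_pos ht).le,
    ENNReal.toReal_ofReal (integral_nonneg_of_ae hnonneg)] at key
  rw [integral_eq_lintegral_of_nonneg_ae (hXpos.mono fun ω hω => (rpow_pos_of_pos hω _).le)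
    (hX.pow_const _).aestronglyMeasurable, ← key, mul_div_cancel_left₀ _ (Gamma_pos_of_pos ht).ne']

/-- For `α ∈ (0,1/2]`, `t ∈ (0,1-α]`, `c = cos(πα)`, and `X` with Laplace transform
`1/(1 + 2cλ^t + λ^{2t})`, one has `E[X^{-t}] = πα/(sin(πα)Γ(t+1))`. -/
theorem neg_t_moment_X {Ω : Type*} [MeasurableSpace Ω] (μ : Measure Ω)
    [IsProbabilityMeasure μ] (α t : ℝ) (hα : α ∈ Ioc (0:ℝ) (1/2))
    (ht : t ∈ Ioc (0:ℝ) (1 - α)) (X : Ω → ℝ) (hXpos : ∀ᵐ ω ∂μ, 0 < X ω)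
    (hLap : ∀ l : ℝ, 0 ≤ l →
      ∫ ω, Real.exp (-(l * X ω)) ∂μ =
        1 / (1 + 2 * Real.cos (π * α) * l ^ t + l ^ (2 * t))) :
    ∫ ω, (X ω) ^ (-t) ∂μ = π * α / (Real.sin (π * α) * Real.Gamma (t + 1)) := by
  obtain ⟨hα0, hα_le⟩ := hα
  have ht0 : 0 < t := ht.1
  have hθ0 : 0 < π * α := by positivity
  have hθπ : π * α < π := by nlinarith [pi_pos]
  have hlap_on : EqOn (fun l => l ^ (t - 1) * ∫ ω, exp (-(l * X ω)) ∂μ)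
      (fun l => l ^ (t - 1) * (1 / (1 + 2 * cos (π * α) * l ^ t + l ^ (2 * t)))) (Ioi 0) :=
    fun l hl => by simp only [hLap l (le_of_lt hl)]
  have hlap_int : ∀ l : ℝ, 0 < l → Integrable (fun ω => exp (-(l * X ω))) μ := fun l hl =>
    Integrable.of_integral_ne_zero <| by
      rw [hLap l hl.le, one_add_two_cos_mul_rpow_add_rpow_two_mul _ _ hl.le]
      have := sin_pos_of_pos_of_lt_pi hθ0 hθπ
      positivity
  rw [integral_rpow_neg_eq_integral_laplace_div_Gamma hXpos hlap_int ht0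
      ((integrableOn_rpow_sub_one_div_one_add_two_cos_mul_rpow_add_rpow hθ0 hθπ ht0).congr_fun
        hlap_on.symm measurableSet_Ioi),
    setIntegral_congr_fun measurableSet_Ioi hlap_on,
    integral_rpow_sub_one_div_one_add_two_cos_mul_rpow_add_rpow hθ0 hθπ ht0,
    Gamma_add_one ht0.ne']
  field_simp
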